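/- arXiv:1802.00523 — 9 statements merged into one kernel-verified Lean document; each statement's English description precedes it below -/
import Mathlib

section
/- For words v1, v2 over an alphabet A, v1·v2 = v2·v1 if and only if there exists a word w and natural numbers p, q such that v1 = w^p and v2 = w^q. -/
/-! If `u` and `v` commute and `|u| ≤ |v|`, then `u` is a prefix of `v`, say `v = u t`, and `t` again
commutes with `u`. This is a Euclidean algorithm on words: induction on `|u| + |v|` ends at the
empty word, and unwinding it writes `u` and `v` as powers of a common word. -/

namespace FreeMonoid

variable {α : Type*}

/-- Both `toList u` and `toList v` are prefixes of the word `u * v = v * u`, so the shorter one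
is a prefix of the longer. -/
theorem exists_eq_mul_of_commute_of_length_le {u v : FreeMonoid α} (h : Commute u v)
    (hle : u.length ≤ v.length) : ∃ t, v = u * t ∧ Commute u t := by
  have hprefix : toList u <+: toList v :=
    List.prefix_of_prefix_length_le (List.prefix_append _ _)
      (by rw [← toList_mul, h.eq, toList_mul]; exact List.prefix_append _ _) hle
  obtain ⟨t, ht⟩ := hprefix
  have hv : v = u * ofList t := toList.injective (by rw [toList_mul, toList_ofList, ht])
  refine ⟨ofList t, hv, mul_left_cancel (a := u) ?_⟩
  calc u * (u * ofList t) = u * v := by rw [hv]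
    _ = v * u := h.eq
    _ = u * (ofList t * u) := by rw [hv, mul_assoc]

theorem exists_pow_eq_of_commute {u v : FreeMonoid α} (h : Commute u v) :
    ∃ (w : FreeMonoid α) (p q : ℕ), u = w ^ p ∧ v = w ^ q := by
  induction hn : u.length + v.length using Nat.strong_induction_on generalizing u v with
  | _ n ih => ?_
  wlog hle : u.length ≤ v.length generalizing u v
  · obtain ⟨w, p, q, hv, hu⟩ := this h.symm (by omega) (by omega)
    exact ⟨w, q, p, hu, hv⟩
  rcases eq_or_ne u 1 with rfl | hu
  · exact ⟨v, 0, 1, (pow_zero v).symm, (pow_one v).symm⟩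
  obtain ⟨t, rfl, hut⟩ := exists_eq_mul_of_commute_of_length_le h hle
  have hlt : u.length + t.length < n := by
    have := length_eq_zero.not.mpr hu
    rw [← hn, length_mul]
    omega
  obtain ⟨w, p, q, rfl, rfl⟩ := ih _ hlt hut rfl
  exact ⟨w, p, p + q, rfl, (pow_add w p q).symm⟩

theorem commute_iff_exists_pow_eq {u v : FreeMonoid α} :
    Commute u v ↔ ∃ (w : FreeMonoid α) (p q : ℕ), u = w ^ p ∧ v = w ^ q := by
  refine ⟨exists_pow_eq_of_commute, ?_⟩
  rintro ⟨w, p, q, rfl, rfl⟩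
  exact (Commute.refl w).pow_pow p q

end FreeMonoid

/-- Commutativity equation: `v1 v2 = v2 v1` iff both are powers of a common word. -/
theorem stmt0 {A : Type*} (v1 v2 : FreeMonoid A) :
    v1 * v2 = v2 * v1 ↔ ∃ (w : FreeMonoid A) (p q : ℕ), v1 = w ^ p ∧ v2 = w ^ q :=
  FreeMonoid.commute_iff_exists_pow_eq
end

section
/- Let a and b be two distinct letters of A, let U, V be words over X ∪ A, and define Z1 = U·a·U'·U·b·U' and Z2 = V·a·V'·V·b·V'. Then for any substitution h : (X ∪ A)* → A* (a monoid homomorphism fixing every letter of A), h(Z1) = h(Z2) if and only if h(U) = h(V) and h(U') = h(V'). -/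
/-!
Both sides have even length, so the equation splits into its two halves: `u a u' = v a v'` and
`u b u' = v b v'`. The words `u a u'` and `u b u'` differ exactly at position `|u|`, and by the
second description exactly at position `|v|`; since `a ≠ b` they do differ, so `|u| = |v|` and the
decompositions coincide.
-/

namespace List

variable {α : Type*}

theorem getElem?_append_cons_eq_of_ne (u w : List α) (a b : α) {i : ℕ} (hi : i ≠ u.length) :
    (u ++ a :: w)[i]? = (u ++ b :: w)[i]? := by
  rcases Nat.lt_or_gt_of_ne hi with hi | hi
  · simp only [getElem?_append_left hi]
  · simp only [getElem?_append_right hi.le]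
    rw [show i - u.length = i - u.length - 1 + 1 by omega]
    rfl

theorem append_cons_inj_of_ne {a b : α} (hab : a ≠ b) {u u' v v' : List α}
    (ha : u ++ a :: u' = v ++ a :: v') (hb : u ++ b :: u' = v ++ b :: v') :
    u = v ∧ u' = v' := by
  have hlen : u.length = v.length := by
    by_contra hne
    have hu : (u ++ a :: u')[u.length]? = (u ++ b :: u')[u.length]? := by
      rw [ha, hb]; exact getElem?_append_cons_eq_of_ne v v' a b hne
    simp [hab] at hu
  obtain ⟨rfl, hcons⟩ := append_inj ha hlen
  exact ⟨rfl, (cons_inj_right a).mp hcons⟩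

theorem append_cons_append_append_cons_inj {a b : α} (hab : a ≠ b) {u u' v v' : List α} :
    (u ++ a :: u') ++ (u ++ b :: u') = (v ++ a :: v') ++ (v ++ b :: v') ↔ u = v ∧ u' = v' := by
  refine ⟨fun h => ?_, by rintro ⟨rfl, rfl⟩; rfl⟩
  have hhalf : (u ++ a :: u').length = (v ++ a :: v').length := by
    have := congrArg length h
    simp only [length_append, length_cons] at this ⊢
    omega
  obtain ⟨ha, hb⟩ := append_inj h hhalf
  exact append_cons_inj_of_ne hab ha hb

end List

namespace FreeMonoid

variable {α : Type*}

theorem mul_of_mul_mul_mul_of_mul_inj {a b : α} (hab : a ≠ b) {u u' v v' : FreeMonoid α} :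
    u * of a * u' * u * of b * u' = v * of a * v' * v * of b * v' ↔ u = v ∧ u' = v' := by
  rw [← toList.injective.eq_iff, ← toList.injective.eq_iff, ← toList.injective.eq_iff]
  simp only [toList_mul, toList_of, List.append_assoc, List.singleton_append]
  simpa only [List.append_assoc, List.cons_append] using List.append_cons_append_append_cons_inj hab

end FreeMonoid

/-- Lemma of Karhumäki et al.: `U a U' U b U' = V a V' V b V'` under a substitution `h`
iff `h(U) = h(V)` and `h(U') = h(V')`. -/
theorem stmt1 {A X : Type*} (a b : A) (hab : a ≠ b)
    (U V U' V' : FreeMonoid (A ⊕ X))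
    (h : FreeMonoid (A ⊕ X) →* FreeMonoid A)
    (hfix : ∀ c : A, h (FreeMonoid.of (Sum.inl c)) = FreeMonoid.of c) :
    h (U * FreeMonoid.of (Sum.inl a) * U' * U * FreeMonoid.of (Sum.inl b) * U') =
      h (V * FreeMonoid.of (Sum.inl a) * V' * V * FreeMonoid.of (Sum.inl b) * V') ↔
      (h U = h V ∧ h U' = h V') := by
  simp only [map_mul, hfix]
  exact FreeMonoid.mul_of_mul_mul_mul_of_mul_inj hab
end

section
/- Let Y = {y_1, ..., y_n} be a set of variables, let a, b be distinct letters of A, let U, V be words over Y ∪ A, and let k > |U| + |V|. Define the substitution h by h(y_i) = a·b^{k+i}·a. Then h(U) = h(V) if and only if U and V are identical as words over Y ∪ A. -/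
/-!
Every factor of `h(W)` that begins with `b` is the single letter `b` (the image of the constant
`b`), so a run of `b`s at the start of `h(W)` has length at most `|W|`. Hence if `h(U) = h(V)`,
the first letters of `U` and `V` agree: a constant cannot face a variable `y_i`, whose image
`a b^{k+i} a` would force a run of more than `k` letters `b` at the start of the image of a word
of length at most `k`, and two variables are told apart by the length of their `b`-run. Cancel
the common first factor and induct.
-/

/-- The substitution sending a constant `c` to itself and the variable `y_i`
(for `i ∈ {1,…,n}`) to `a b^{k+i} a`. -/
def sub2 {A : Type*} (a b : A) (n k : ℕ) : FreeMonoid (A ⊕ Fin n) →* FreeMonoid A :=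
  FreeMonoid.lift (Sum.elim (fun c => FreeMonoid.of c)
    (fun i : Fin n =>
      FreeMonoid.of a * (FreeMonoid.of b) ^ (k + i.val + 1) * FreeMonoid.of a))

theorem FreeMonoid.toList_of_pow {α : Type*} (x : α) (m : ℕ) :
    (of x ^ m).toList = List.replicate m x := by
  induction m with
  | zero => rfl
  | succ m ih => rw [pow_succ, toList_mul, ih, toList_of, List.replicate_succ']

theorem List.eq_of_replicate_append_cons_eq {α : Type*} {a b : α} (hab : a ≠ b) {m m' : ℕ}
    {s t : List α} (h : replicate m b ++ a :: s = replicate m' b ++ a :: t) : m = m' := by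
  wlog hle : m ≤ m' generalizing m m' s t
  · exact (this h.symm (by omega)).symm
  by_contra hne
  have hm := congrArg (·[m]?) h
  simp [getElem?_append_left, lt_of_le_of_ne hle hne] at hm
  exact hab hm

section

variable {A : Type*} (a b : A) (n k : ℕ)

def sub2List : A ⊕ Fin n → List A :=
  Sum.elim (fun c => [c]) (fun i => a :: (List.replicate (k + i.val + 1) b ++ [a]))

@[simp] theorem sub2List_inl (c : A) : sub2List a b n k (.inl c) = [c] := rfl

@[simp] theorem sub2List_inr (i : Fin n) :
    sub2List a b n k (.inr i) = a :: (List.replicate (k + i.val + 1) b ++ [a]) := rfl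

theorem sub2List_ne_nil (x : A ⊕ Fin n) : sub2List a b n k x ≠ [] := by
  rcases x with c | i <;> simp

theorem toList_sub2 (U : FreeMonoid (A ⊕ Fin n)) :
    (sub2 a b n k U).toList = (U.toList.map (sub2List a b n k)).flatten := by
  rw [sub2, FreeMonoid.lift_apply, FreeMonoid.toList_prod, List.map_map]
  congr 2
  ext1 (c | i) <;> simp [FreeMonoid.toList_of_pow]

variable {a b n k}

theorem le_length_of_flatten_map_sub2List_eq (hab : a ≠ b) {L : List (A ⊕ Fin n)} {m : ℕ}
    {t : List A} (h : (L.map (sub2List a b n k)).flatten = List.replicate m b ++ t) :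
    m ≤ L.length := by
  induction L generalizing m with
  | nil => simp_all
  | cons x L ih =>
    rcases m with _ | m
    · omega
    rcases x with c | i
    · simp only [List.map_cons, List.flatten_cons, sub2List_inl, List.replicate_succ] at h
      simpa using ih (List.cons.inj h).2
    · simp only [List.map_cons, List.flatten_cons, sub2List_inr, List.replicate_succ] at h
      exact absurd (List.cons.inj h).1 hab

theorem sub2List_eq_of_append_eq (hab : a ≠ b) {x y : A ⊕ Fin n} {L M : List (A ⊕ Fin n)}
    (hL : L.length ≤ k) (hM : M.length ≤ k)
    (h : sub2List a b n k x ++ (L.map (sub2List a b n k)).flatten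
      = sub2List a b n k y ++ (M.map (sub2List a b n k)).flatten) : x = y := by
  rcases x with c | i <;> rcases y with c' | j <;>
    simp only [sub2List_inl, sub2List_inr, List.cons_append, List.cons.injEq,
      List.append_assoc] at h
  · rw [h.1]
  · have := le_length_of_flatten_map_sub2List_eq hab h.2
    omega
  · have := le_length_of_flatten_map_sub2List_eq hab h.2.symm
    omega
  · have := List.eq_of_replicate_append_cons_eq hab h.2
    rw [Fin.ext (by omega : i.val = j.val)]

theorem eq_of_flatten_map_sub2List_eq (hab : a ≠ b) {L M : List (A ⊕ Fin n)}
    (hL : L.length ≤ k + 1) (hM : M.length ≤ k + 1)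
    (h : (L.map (sub2List a b n k)).flatten = (M.map (sub2List a b n k)).flatten) : L = M := by
  induction L generalizing M with
  | nil =>
    cases M with
    | nil => rfl
    | cons y M => simp [sub2List_ne_nil] at h
  | cons x L ih =>
    cases M with
    | nil => simp [sub2List_ne_nil] at h
    | cons y M =>
      simp only [List.map_cons, List.flatten_cons, List.length_cons] at h hL hM
      obtain rfl := sub2List_eq_of_append_eq hab (by omega) (by omega) h
      rw [ih (by omega) (by omega) (List.append_cancel_left h)]

end

/-- If `k > |U| + |V|`, then the equation `U = V` is satisfied by the substitution
`y_i ↦ a b^{k+i} a` iff `U` and `V` coincide. -/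
theorem stmt2 {A : Type*} (a b : A) (hab : a ≠ b) (n k : ℕ)
    (U V : FreeMonoid (A ⊕ Fin n))
    (hk : (FreeMonoid.toList U).length + (FreeMonoid.toList V).length < k) :
    sub2 a b n k U = sub2 a b n k V ↔ U = V := by
  refine ⟨fun h => FreeMonoid.toList.injective ?_, congrArg _⟩
  refine eq_of_flatten_map_sub2List_eq hab (k := k) (by omega) (by omega) ?_
  rw [← toList_sub2, ← toList_sub2, h]
end

section
/- Let U, V be words over X ∪ {a}. The equation U = V has a solution (a substitution h with h(U) = h(V)) over any alphabet A containing a if and only if it has a solution in which every variable is mapped to a power of a. -/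
/-!
Composing a solution with the letter-to-letter morphism `A* → A*` that sends every letter to `a`
gives again a solution, since that morphism fixes `a`; and it maps every variable to a power of `a`.
-/

/-- Substitution for words over `X ∪ {a}` (variables `some x`, the terminal `a` is `none`). -/
def asubst {A X : Type*} (a : A) (σ : X → List A) (w : List (Option X)) : List A :=
  w.flatMap (fun o => o.elim [a] σ)

theorem map_asubst {A B X : Type*} (f : A → B) (a : A) (σ : X → List A) (w : List (Option X)) :
    (asubst a σ w).map f = asubst (f a) (fun x => (σ x).map f) w := by
  simp only [asubst, List.map_flatMap]
  congr 1
  funext o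
  cases o <;> rfl

/-- An equation over one terminal letter `a` has a solution over `A` iff it has a solution
in which every variable is mapped to a power of `a`. -/
theorem stmt5 {A X : Type*} (a : A) (U V : List (Option X)) :
    (∃ σ : X → List A, asubst a σ U = asubst a σ V) ↔
    (∃ σ : X → List A, (∀ x : X, ∃ k : ℕ, σ x = List.replicate k a) ∧
      asubst a σ U = asubst a σ V) := by
  constructor
  · rintro ⟨σ, h⟩
    refine ⟨fun x => (σ x).map fun _ => a, fun x => ⟨_, List.map_const'⟩, ?_⟩
    simpa only [map_asubst] using congrArg (List.map fun _ => a) h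
  · rintro ⟨σ, -, h⟩
    exact ⟨σ, h⟩
end

section
/- Let a, b be distinct letters. For natural numbers i, j, p with j, p ≥ 1: there exist monoid homomorphisms g, h : A* → A* with g((a^i·b)^p) = a^j and h(a^j) = (a^i·b)^p if and only if j = p. -/
/-! Since `g` and `h` commute with powers, comparing lengths in `g((aⁱb)ᵖ) = aʲ` gives `p ∣ j`,
and counting the letter `b` in `h(aʲ) = (aⁱb)ᵖ` gives `j ∣ p`. Conversely, for `j = p` take
`g` erasing every letter but `b` and sending `b ↦ a`, and `h` sending every letter to `aⁱb`. -/

namespace FreeMonoid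

variable {α : Type*}

theorem length_pow (x : FreeMonoid α) (n : ℕ) : (x ^ n).length = n * x.length := by
  induction n with
  | zero => simp
  | succ n ih => rw [pow_succ, length_mul, ih, add_mul, one_mul]

section Count

variable [DecidableEq α] (c : α)

theorem toAdd_count_mul (x y : FreeMonoid α) :
    (count c (x * y)).toAdd = (count c x).toAdd + (count c y).toAdd := by
  rw [map_mul, toAdd_mul]

theorem toAdd_count_pow (x : FreeMonoid α) (n : ℕ) :
    (count c (x ^ n)).toAdd = n * (count c x).toAdd := by
  rw [map_pow, toAdd_pow, smul_eq_mul]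

theorem toAdd_count_of_self : (count c (of c)).toAdd = 1 := by
  simp [count_of]

theorem toAdd_count_of_of_ne {x : α} (hx : x ≠ c) : (count c (of x)).toAdd = 0 := by
  simp [count_of, hx.symm]

end Count

end FreeMonoid

open FreeMonoid

theorem eq_of_map_pow_eq_of_pow {A : Type*} {a b : A} (hab : a ≠ b) {i j p : ℕ}
    (g h : FreeMonoid A →* FreeMonoid A)
    (hg : g ((of a ^ i * of b) ^ p) = of a ^ j) (hh : h (of a ^ j) = (of a ^ i * of b) ^ p) :
    j = p := by
  classical
  have hpj : p ∣ j := by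
    have := congrArg length hg
    rw [map_pow, length_pow, length_pow, length_of, mul_one] at this
    exact Dvd.intro _ this
  have hjp : j ∣ p := by
    have := congrArg (fun w => (count b w).toAdd) hh
    simp only [map_pow h, toAdd_count_pow, toAdd_count_mul, toAdd_count_of_of_ne b hab,
      toAdd_count_of_self, mul_zero, zero_add, mul_one] at this
    exact Dvd.intro _ this
  exact Nat.dvd_antisymm hjp hpj

theorem exists_map_pow_eq_of_pow {A : Type*} [DecidableEq A] {a b : A} (hab : a ≠ b) (i p : ℕ) :
    ∃ g h : FreeMonoid A →* FreeMonoid A,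
      g ((of a ^ i * of b) ^ p) = of a ^ p ∧ h (of a ^ p) = (of a ^ i * of b) ^ p := by
  refine ⟨lift (fun x => if x = b then of a else 1), lift (fun _ => of a ^ i * of b), ?_, ?_⟩
  · simp [hab]
  · simp

theorem stmt7_general {A : Type*} (a b : A) (hab : a ≠ b) (i j p : ℕ) :
    (∃ g h : FreeMonoid A →* FreeMonoid A,
        g (((FreeMonoid.of a) ^ i * FreeMonoid.of b) ^ p) = (FreeMonoid.of a) ^ j ∧
        h ((FreeMonoid.of a) ^ j) = ((FreeMonoid.of a) ^ i * FreeMonoid.of b) ^ p) ↔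
      j = p := by
  classical
  constructor
  · rintro ⟨g, h, hg, hh⟩
    exact eq_of_map_pow_eq_of_pow hab g h hg hh
  · rintro rfl
    exact exists_map_pow_eq_of_pow hab i j

/-- For `j, p ≥ 1`: there are monoid endomorphisms `g, h` of `A*` with
`g((a^i b)^p) = a^j` and `h(a^j) = (a^i b)^p` iff `j = p`. -/
theorem stmt7 {A : Type*} (a b : A) (hab : a ≠ b) (i j p : ℕ) (hj : 1 ≤ j) (hp : 1 ≤ p) :
    (∃ g h : FreeMonoid A →* FreeMonoid A,
        g (((FreeMonoid.of a) ^ i * FreeMonoid.of b) ^ p) = (FreeMonoid.of a) ^ j ∧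
        h ((FreeMonoid.of a) ^ j) = ((FreeMonoid.of a) ^ i * FreeMonoid.of b) ^ p) ↔
      j = p :=
  stmt7_general a b hab i j p
end

section
/- Let a, b, c be pairwise distinct letters, and let i, j, k be natural numbers with i·j ≥ 2. Set u = (a^i b)^j c c (a^i b)^j a^i c c b and v = a^k c c a^{k+i} c c. Then there exists a monoid homomorphism f : A* → A* with f(u) = v if and only if k = i·j. -/
/-! If `k = ij`, erasing `b` maps `u` to `v`. Conversely, every letter of `f a`, `f b`, `f c`
occurs in `v`, so these are words `a^n₀ c a^n₁ ⋯ c a^nᵣ` over `{a, c}` (`blockWord`), and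
such a word determines its exponent sequence. Counting `c`'s,
`(2j + 1)(i |f a|_c + |f b|_c) + 4 |f c|_c = 4`, which forces `f a = a^m`, `f b = a^n` and
`f c = a^p c a^q`. Comparing the exponent sequences of `f u` and `v` then gives `n = p = q = 0`,
`k = mij` and `mi = i`, so `m = 1` and `k = ij`. -/

namespace FreeMonoid

variable {A B : Type*}

theorem mem_pow {d : A} {w : FreeMonoid A} {n : ℕ} : d ∈ w ^ n ↔ n ≠ 0 ∧ d ∈ w := by
  induction n with
  | zero => simp [notMem_one]
  | succ n ih => by_cases hn : n = 0 <;> simp_all [pow_succ, mem_mul]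

theorem mem_map_of_mem (f : FreeMonoid A →* FreeMonoid B) {w : FreeMonoid A} {e : A}
    (he : e ∈ w) {d : B} (hd : d ∈ f (of e)) : d ∈ f w := by
  induction w using FreeMonoid.inductionOn' with
  | one => exact absurd he notMem_one
  | of_mul e' w ih =>
    rw [map_mul, mem_mul]
    rcases mem_mul.1 he with he | he
    · exact .inl (mem_of.1 he ▸ hd)
    · exact .inr (ih he)

theorem of_mul_eq_of_mul_iff {x y : A} {w w' : FreeMonoid A} :
    of x * w = of y * w' ↔ x = y ∧ w = w' :=
  ⟨fun h => by simpa using congrArg toList h, by rintro ⟨rfl, rfl⟩; rfl⟩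

theorem of_pow_mul_of_mul_inj {a c : A} (hac : a ≠ c) {n n' : ℕ} {w w' : FreeMonoid A}
    (h : of a ^ n * (of c * w) = of a ^ n' * (of c * w')) : n = n' ∧ w = w' := by
  induction n generalizing n' with
  | zero =>
    cases n' with
    | zero => simpa [of_mul_eq_of_mul_iff] using h
    | succ n' => simp [pow_succ', mul_assoc, of_mul_eq_of_mul_iff, hac.symm] at h
  | succ n ih =>
    cases n' with
    | zero => simp [pow_succ', mul_assoc, of_mul_eq_of_mul_iff, hac] at h
    | succ n' =>
      rw [pow_succ', pow_succ', mul_assoc, mul_assoc, of_mul_eq_of_mul_iff] at h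
      simpa using ih h.2

@[simp] theorem toAdd_count_of [DecidableEq A] (x y : A) :
    (count x (of y)).toAdd = if y = x then 1 else 0 := by
  simp only [count_of, Pi.mulSingle_apply, eq_comm]
  split_ifs <;> rfl

def blockWord (a c : A) (n : ℕ) : List ℕ → FreeMonoid A
  | [] => of a ^ n
  | m :: ms => of a ^ n * (of c * blockWord a c m ms)

section blockWord

variable {a c : A}

@[simp] theorem blockWord_nil (n : ℕ) : blockWord a c n [] = of a ^ n := rfl

@[simp] theorem blockWord_cons (n m : ℕ) (ms : List ℕ) :
    blockWord a c n (m :: ms) = of a ^ n * (of c * blockWord a c m ms) := rfl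

theorem count_blockWord [DecidableEq A] (hac : a ≠ c) (n : ℕ) (ns : List ℕ) :
    (count c (blockWord a c n ns)).toAdd = ns.length := by
  induction ns generalizing n with
  | nil => simp [hac]
  | cons m ms ih => simp [hac, ih, add_comm]

theorem blockWord_inj (hac : a ≠ c) {n n' : ℕ} {ns ns' : List ℕ}
    (h : blockWord a c n ns = blockWord a c n' ns') : n = n' ∧ ns = ns' := by
  classical
  have hlen := congrArg (fun w => (count c w).toAdd) h
  simp only [count_blockWord hac] at hlen
  induction ns generalizing n n' ns' with
  | nil =>
    obtain rfl : ns' = [] := List.eq_nil_of_length_eq_zero hlen.symm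
    simpa using congrArg (fun w => (count a w).toAdd) h
  | cons m ms ih =>
    obtain ⟨m', ms', rfl⟩ := List.exists_cons_of_length_eq_add_one hlen.symm
    obtain ⟨rfl, hrest⟩ := of_pow_mul_of_mul_inj hac h
    obtain ⟨rfl, rfl⟩ := ih hrest (by simpa using hlen)
    exact ⟨rfl, rfl⟩

theorem mem_blockWord {d : A} {n : ℕ} {ns : List ℕ} (hd : d ∈ blockWord a c n ns) :
    d = a ∨ d = c := by
  induction ns generalizing n with
  | nil => exact .inl (mem_of.1 (mem_pow.1 hd).2)
  | cons m ms ih =>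
    rcases mem_mul.1 hd with hd | hd
    · exact .inl (mem_of.1 (mem_pow.1 hd).2)
    · rcases mem_mul.1 hd with hd | hd
      · exact .inr (mem_of.1 hd)
      · exact ih hd

theorem exists_eq_blockWord {w : FreeMonoid A} (hw : ∀ d ∈ w, d = a ∨ d = c) :
    ∃ n ns, w = blockWord a c n ns := by
  induction w using FreeMonoid.inductionOn' with
  | one => exact ⟨0, [], rfl⟩
  | of_mul e w ih =>
    obtain ⟨n, ns, rfl⟩ := ih fun d hd => hw d (mem_mul.2 (.inr hd))
    rcases hw e (mem_mul.2 (.inl mem_of_self)) with rfl | rfl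
    · refine ⟨n + 1, ns, ?_⟩
      cases ns <;> simp [pow_succ', mul_assoc]
    · exact ⟨0, n :: ns, by simp⟩

theorem exists_map_of_eq_blockWord (f : FreeMonoid B →* FreeMonoid A)
    {w : FreeMonoid B} {n : ℕ} {ns : List ℕ} (hf : f w = blockWord a c n ns) {e : B}
    (he : e ∈ w) : ∃ m ms, f (of e) = blockWord a c m ms :=
  exists_eq_blockWord fun _ hd => mem_blockWord (hf ▸ mem_map_of_mem f he hd)

end blockWord

end FreeMonoid

open FreeMonoid

theorem eq_zero_and_eq_one_of_mul_add_four_mul_eq_four {j W Z : ℕ} (hj : 0 < j)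
    (h : (2 * j + 1) * W + 4 * Z = 4) : W = 0 ∧ Z = 1 := by
  have hW : W ≤ j * W := Nat.le_mul_of_pos_left W hj
  rw [show (2 * j + 1) * W = 2 * (j * W) + W by ring] at h
  obtain rfl : W = 0 := by omega
  exact ⟨rfl, by simpa using h⟩

theorem image_eq_blockWord {A : Type*} (a c : A) (i j m n p q : ℕ) :
    (blockWord a c m [] ^ i * blockWord a c n []) ^ j * blockWord a c p [q] *
      blockWord a c p [q] * (blockWord a c m [] ^ i * blockWord a c n []) ^ j *
      blockWord a c m [] ^ i * blockWord a c p [q] * blockWord a c p [q] * blockWord a c n [] =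
    blockWord a c ((m * i + n) * j + p) [q + p, q + (m * i + n) * j + m * i + p, q + p, q + n] := by
  simp only [blockWord_nil, blockWord_cons, ← pow_mul, ← pow_add]
  simp only [pow_add, mul_assoc]

theorem eq_mul_of_map_eq {A : Type*} {a b c : A} (hac : a ≠ c) {i j k : ℕ} (hi : 0 < i)
    (hj : 0 < j) (f : FreeMonoid A →* FreeMonoid A)
    (hf : f ((of a ^ i * of b) ^ j * of c * of c * (of a ^ i * of b) ^ j * of a ^ i *
      of c * of c * of b) = of a ^ k * of c * of c * of a ^ (k + i) * of c * of c) :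
    k = i * j := by
  classical
  rw [show of a ^ k * of c * of c * of a ^ (k + i) * of c * of c =
    blockWord a c k [0, k + i, 0, 0] by simp [mul_assoc]] at hf
  obtain ⟨m, xs, hx⟩ := exists_map_of_eq_blockWord f hf (e := a)
    (by simp [mem_mul, mem_pow, mem_of, hi.ne'])
  obtain ⟨n, ys, hy⟩ := exists_map_of_eq_blockWord f hf (e := b) (by simp [mem_mul, mem_of])
  obtain ⟨p, zs, hz⟩ := exists_map_of_eq_blockWord f hf (e := c) (by simp [mem_mul, mem_of])
  simp only [map_mul, map_pow, hx, hy, hz] at hf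
  have hcount := congrArg (fun w => (count c w).toAdd) hf
  simp only [map_mul, map_pow, toAdd_mul, toAdd_pow, count_blockWord hac, smul_eq_mul,
    List.length_cons, List.length_nil] at hcount
  obtain ⟨hlen_ab, hlen_c⟩ := eq_zero_and_eq_one_of_mul_add_four_mul_eq_four
    (W := i * xs.length + ys.length) hj (by linarith)
  obtain ⟨rfl, rfl⟩ : xs = [] ∧ ys = [] := by simpa [hi.ne'] using hlen_ab
  obtain ⟨q, rfl⟩ : ∃ q, zs = [q] := List.length_eq_one_iff.1 hlen_c
  rw [image_eq_blockWord] at hf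
  obtain ⟨hk, h⟩ := blockWord_inj hac hf
  simp only [List.cons.injEq, and_true, Nat.add_eq_zero_iff] at h
  obtain ⟨⟨rfl, rfl⟩, hmid, -, -, rfl⟩ := h
  simp only [add_zero, zero_add] at hk hmid
  obtain rfl : m = 1 := Nat.eq_of_mul_eq_mul_right hi (by omega)
  simpa [mul_comm] using hk.symm

/-- For pairwise distinct letters `a, b, c` and `ij ≥ 2`, there is a monoid endomorphism
`f` of `A*` with `f((a^i b)^j cc (a^i b)^j a^i cc b) = a^k cc a^{k+i} cc` iff `k = ij`. -/
theorem stmt8 {A : Type*} (a b c : A) (hab : a ≠ b) (hac : a ≠ c) (hbc : b ≠ c)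
    (i j k : ℕ) (hij : 2 ≤ i * j) :
    (∃ f : FreeMonoid A →* FreeMonoid A,
        f (((FreeMonoid.of a) ^ i * FreeMonoid.of b) ^ j * FreeMonoid.of c * FreeMonoid.of c *
            ((FreeMonoid.of a) ^ i * FreeMonoid.of b) ^ j * (FreeMonoid.of a) ^ i *
            FreeMonoid.of c * FreeMonoid.of c * FreeMonoid.of b) =
          (FreeMonoid.of a) ^ k * FreeMonoid.of c * FreeMonoid.of c *
            (FreeMonoid.of a) ^ (k + i) * FreeMonoid.of c * FreeMonoid.of c) ↔
      k = i * j := by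
  have hi : 0 < i := Nat.pos_of_ne_zero (by rintro rfl; simp at hij)
  have hj : 0 < j := Nat.pos_of_ne_zero (by rintro rfl; simp at hij)
  constructor
  · rintro ⟨f, hf⟩
    exact eq_mul_of_map_eq hac hi hj f hf
  · rintro rfl
    classical
    refine ⟨FreeMonoid.lift fun e => if e = b then 1 else of e, ?_⟩
    simp [hab, hbc.symm, pow_mul, pow_add, mul_assoc]
end

section
/- Let L be a regular language over A accepted by a DFA with n states, and let α, β ∈ A*. Then there exist q ∈ ℕ and finite sets P, S ⊆ {0, 1, ..., n} such that the intersection of {(αβ)^m·α : m ≥ 1} with L equals {(αβ)^s·α : s ∈ S} ∪ {(αβ)^{qμ+p}·α : μ ∈ ℕ, p ∈ P}. -/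
/-!
Let `f` be the action of the word `αβ` on the states. Then `(αβ)^m α` is accepted iff
`f^[m] start` is sent into an accepting state by `α`. By pigeonhole the orbit `f^[m] start`,
`1 ≤ m ≤ n + 1`, repeats: `f^[i + q] start = f^[i] start` with `1 ≤ i` and `i + q ≤ n + 1`.
From `i` on, acceptance is `q`-periodic in `m`, so the exponents `m ≤ n` are listed in `S` and
every larger one is `q μ + p` for a residue `p ∈ [i, i + q)`, collected in `P`.
-/

namespace Function

variable {α : Type*} (f : α → α)

theorem exists_iterate_add_eq_of_fintype [Fintype α] (x : α) :
    ∃ i q, 0 < q ∧ i + q ≤ Fintype.card α ∧ f^[i + q] x = f^[i] x := by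
  obtain ⟨a, b, hab, heq⟩ := Fintype.exists_ne_map_eq_of_card_lt
    (fun k : Fin (Fintype.card α + 1) => f^[k] x) (by simp)
  wlog hlt : a < b generalizing a b
  · exact this b a hab.symm heq.symm (lt_of_le_of_ne (not_lt.mp hlt) hab.symm)
  refine ⟨a, b - a, Nat.sub_pos_of_lt hlt, by omega, ?_⟩
  rw [Nat.add_sub_cancel' hlt.le]
  exact heq.symm

theorem iterate_add_mul_eq_of_iterate_add_eq {x : α} {i q : ℕ} (h : f^[i + q] x = f^[i] x)
    {m : ℕ} (hm : i ≤ m) (μ : ℕ) : f^[m + q * μ] x = f^[m] x := by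
  have hperiodic : IsPeriodicPt f q (f^[i] x) := by
    rw [IsPeriodicPt, IsFixedPt, ← iterate_add_apply, add_comm, h]
  have := (hperiodic.mul_const μ).apply_iterate (m - i)
  rw [← iterate_add_apply, Nat.sub_add_cancel hm] at this
  rw [add_comm, iterate_add_apply, this.eq]

end Function

theorem DFA.evalFrom_flatten_replicate {A Q : Type*} (M : DFA A Q) (s : Q) (u : List A)
    (m : ℕ) : M.evalFrom s (List.replicate m u).flatten = (M.evalFrom · u)^[m] s := by
  induction m generalizing s with
  | zero => rfl
  | succ m ih =>
    rw [List.replicate_succ, List.flatten_cons, DFA.evalFrom_of_append, ih,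
      Function.iterate_succ_apply]

theorem Nat.exists_finsets_of_eventually_periodic (T : ℕ → Prop) {n i q : ℕ} (hi : 1 ≤ i)
    (hq : 0 < q) (hiq : i + q ≤ n + 1) (hT : ∀ m, i ≤ m → ∀ μ, (T (m + q * μ) ↔ T m)) :
    ∃ P S : Finset ℕ, (∀ s ∈ S, s ≤ n) ∧ (∀ p ∈ P, p ≤ n) ∧
      ∀ m, (1 ≤ m ∧ T m) ↔ (m ∈ S ∨ ∃ μ, ∃ p ∈ P, m = q * μ + p) := by
  classical
  refine ⟨(Finset.Ico i (i + q)).filter T, (Finset.Icc 1 n).filter T, ?_, ?_, fun m => ?_⟩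
  · intro s hs
    exact (Finset.mem_Icc.mp (Finset.mem_filter.mp hs).1).2
  · intro p hp
    have := Finset.mem_Ico.mp (Finset.mem_filter.mp hp).1
    omega
  simp only [Finset.mem_filter, Finset.mem_Icc, Finset.mem_Ico]
  constructor
  · rintro ⟨hm, hTm⟩
    by_cases hmn : m ≤ n
    · exact Or.inl ⟨⟨hm, hmn⟩, hTm⟩
    · have hdiv := Nat.div_add_mod (m - i) q
      have hmod := Nat.mod_lt (m - i) hq
      have hdecomp : m = (i + (m - i) % q) + q * ((m - i) / q) := by omega
      refine Or.inr ⟨(m - i) / q, i + (m - i) % q, ⟨⟨by omega, by omega⟩, ?_⟩, by omega⟩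
      rwa [← hT _ (by omega), ← hdecomp]
  · rintro (⟨⟨hm, -⟩, hTm⟩ | ⟨μ, p, ⟨⟨hip, -⟩, hTp⟩, rfl⟩)
    · exact ⟨hm, hTm⟩
    · refine ⟨by omega, ?_⟩
      rwa [add_comm, hT p hip]

/-- Intersection of `(αβ)^+ α` with a regular language accepted by a DFA with `n` states:
described by finitely many exponents `S` plus arithmetic progressions `qμ + p`, `p ∈ P`,
with `S, P ⊆ {0,…,n}`. -/
theorem stmt10 {A Q : Type*} [Fintype Q] (M : DFA A Q) (n : ℕ) (hn : Fintype.card Q = n)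
    (α β : List A) :
    ∃ (q : ℕ) (P S : Finset ℕ), (∀ s ∈ S, s ≤ n) ∧ (∀ p ∈ P, p ≤ n) ∧
      ∀ w : List A,
        ((∃ m : ℕ, 1 ≤ m ∧ w = (List.replicate m (α ++ β)).flatten ++ α) ∧ w ∈ M.accepts) ↔
          ((∃ s ∈ S, w = (List.replicate s (α ++ β)).flatten ++ α) ∨
            (∃ μ : ℕ, ∃ p ∈ P, w = (List.replicate (q * μ + p) (α ++ β)).flatten ++ α)) := by
  set f := (M.evalFrom · (α ++ β))
  have haccepts (m : ℕ) : (List.replicate m (α ++ β)).flatten ++ α ∈ M.accepts ↔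
      M.evalFrom (f^[m] M.start) α ∈ M.accept := by
    rw [DFA.mem_accepts, DFA.eval, DFA.evalFrom_of_append, DFA.evalFrom_flatten_replicate]
  obtain ⟨i, q, hq, hiq, hrepeat⟩ := f.exists_iterate_add_eq_of_fintype (f M.start)
  have hrepeat' : f^[(i + 1) + q] M.start = f^[i + 1] M.start := by
    rwa [add_right_comm, Function.iterate_succ_apply, Function.iterate_succ_apply]
  obtain ⟨P, S, hS, hP, hPS⟩ := Nat.exists_finsets_of_eventually_periodic
    (fun m => M.evalFrom (f^[m] M.start) α ∈ M.accept) (n := n) (i := i + 1) (q := q) (by omega) hq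
    (by omega) fun m hm μ => by
      simp only [f.iterate_add_mul_eq_of_iterate_add_eq hrepeat' hm μ]
  refine ⟨q, P, S, hS, hP, fun w => ⟨?_, ?_⟩⟩
  · rintro ⟨⟨m, hm, rfl⟩, hw⟩
    rcases (hPS m).mp ⟨hm, (haccepts m).mp hw⟩ with hs | ⟨μ, p, hp, rfl⟩
    exacts [Or.inl ⟨m, hs, rfl⟩, Or.inr ⟨μ, p, hp, rfl⟩]
  · rintro (⟨m, hm, rfl⟩ | ⟨μ, p, hp, rfl⟩)
    · obtain ⟨hm1, hTm⟩ := (hPS m).mpr (Or.inl hm)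
      exact ⟨⟨m, hm1, rfl⟩, (haccepts m).mpr hTm⟩
    · obtain ⟨hm1, hTm⟩ := (hPS _).mpr (Or.inr ⟨μ, p, hp, rfl⟩)
      exact ⟨⟨_, hm1, rfl⟩, (haccepts _).mpr hTm⟩
end

section
/- The predicate Eq_a (on pairs of words, stating the two words have equal numbers of occurrences of the letter a) is interdefinable with Only_as (stating the second word equals a^{|x|_a} where x is the first word) using only word equations: specifically, for words x, y, Only_as(x, y) holds if and only if y·a = a·y and Eq_a(x, y); and Eq_a(x, y) holds if and only if there exists z with Only_as(x, z) and Only_as(y, z). -/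
/-! A word commuting with the letter `a` consists of `a`'s only (compare the words letter by letter),
so it is `a ^ n` with `n` its number of `a`'s; and `a ^ n = a ^ m` forces `n = m` by comparing lengths. -/

namespace List

variable {α : Type*}

theorem eq_replicate_length_of_append_singleton_eq_cons {a : α} :
    ∀ {y : List α}, y ++ [a] = a :: y → y = replicate y.length a
  | [], _ => rfl
  | b :: t, h => by
    obtain ⟨rfl, ht⟩ := cons_eq_cons.mp h
    exact congrArg (b :: ·) (eq_replicate_length_of_append_singleton_eq_cons ht)

theorem replicate_append_singleton_eq_cons (n : ℕ) (a : α) :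
    replicate n a ++ [a] = a :: replicate n a := by
  rw [← replicate_succ', replicate_succ]

variable [DecidableEq α]

theorem eq_replicate_count_iff_commute_and_count_eq (a : α) (x y : List α) :
    y = replicate (x.count a) a ↔ y ++ [a] = [a] ++ y ∧ x.count a = y.count a := by
  constructor
  · rintro rfl
    exact ⟨replicate_append_singleton_eq_cons _ a, (count_replicate_self ..).symm⟩
  · rintro ⟨hcomm, hcount⟩
    have hy := eq_replicate_length_of_append_singleton_eq_cons hcomm
    rw [hcount, hy, count_replicate_self]

theorem count_eq_iff_exists_eq_replicate_count (a : α) (x y : List α) :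
    x.count a = y.count a ↔
      ∃ z : List α, z = replicate (x.count a) a ∧ z = replicate (y.count a) a := by
  constructor
  · intro h
    exact ⟨_, rfl, by rw [h]⟩
  · rintro ⟨z, rfl, h⟩
    exact replicate_left_inj.mp h

end List

/-- `Eq_a` and `Only_as` are interdefinable using word equations:
`Only_as(x,y) ↔ ya = ay ∧ Eq_a(x,y)` and `Eq_a(x,y) ↔ ∃ z, Only_as(x,z) ∧ Only_as(y,z)`. -/
theorem stmt12 {A : Type*} [DecidableEq A] (a : A) :
    (∀ x y : List A,
        y = List.replicate (x.count a) a ↔ (y ++ [a] = [a] ++ y ∧ x.count a = y.count a)) ∧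
    (∀ x y : List A,
        x.count a = y.count a ↔
          ∃ z : List A, z = List.replicate (x.count a) a ∧ z = List.replicate (y.count a) a) :=
  ⟨List.eq_replicate_count_iff_commute_and_count_eq a,
    List.count_eq_iff_exists_eq_replicate_count a⟩
end

section
/- Truth of positive Σ2 sentences over A* reduces to triviality: a sentence ∃x_1,...,x_n ∀y_1,...,y_m. E_1 ∨ E_2 ∨ ... ∨ E_t, where each E_i is a single positive word equation over variables x_1,...,x_n,y_1,...,y_m and constants from A (|A| ≥ 2), holds in A* if and only if there exists an assignment of words to x_1,...,x_n under which at least one E_i becomes a trivial equation (both sides identical as words over {y_1,...,y_m} ∪ A). -/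
/-!
Substituting `σx` and then `σy` is the same as substituting `Sum.elim σx σy` at once, so a
trivial equation stays true under every `σy`. Conversely, fix `σx` and send `y_j` to
`a b^(N+j) a`, with `N` larger than every side of every `psubst σx (E i)`. This substitution is
injective on patterns of length at most `N`: a pattern shorter than `N` yields fewer than `N`
leading `b`s, so a block `a b^(N+j) a` can be matched neither by the constant `a` followed by
the rest of the pattern nor by a block of another length. Hence the equation that holds under
it was already trivial after `σx`.
-/

/-- Substitution on patterns: constants are fixed, variables are replaced by `σ`. -/
def wsubst {A V : Type} (σ : V → List A) (w : List (A ⊕ V)) : List A :=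
  w.flatMap (Sum.elim (fun c => [c]) σ)

/-- Partial substitution: replace the existential variables `x_i` by the words `σx i`,
leaving the constants and the universal variables `y_j` untouched; the result is a
pattern over the variables `y_1, …, y_m`. -/
def psubst {A : Type} {n m : ℕ} (σx : Fin n → List A) (w : List (A ⊕ (Fin n ⊕ Fin m))) :
    List (A ⊕ Fin m) :=
  w.flatMap (fun s =>
    match s with
    | Sum.inl c => [Sum.inl c]
    | Sum.inr (Sum.inl i) => (σx i).map Sum.inl
    | Sum.inr (Sum.inr j) => [Sum.inr j])

@[simp] lemma wsubst_nil {A V : Type} (σ : V → List A) : wsubst σ ([] : List (A ⊕ V)) = [] := rfl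

@[simp] lemma wsubst_cons {A V : Type} (σ : V → List A) (s : A ⊕ V) (w : List (A ⊕ V)) :
    wsubst σ (s :: w) = Sum.elim (fun c => [c]) σ s ++ wsubst σ w := by
  simp [wsubst]

lemma wsubst_psubst {A : Type} {n m : ℕ} (σx : Fin n → List A) (σy : Fin m → List A)
    (w : List (A ⊕ (Fin n ⊕ Fin m))) :
    wsubst σy (psubst σx w) = wsubst (Sum.elim σx σy) w := by
  unfold wsubst psubst
  rw [List.flatMap_assoc]
  congr 1
  funext s
  rcases s with c | i | j <;> simp [List.flatMap_map]

lemma replicate_append_cons_inj {α : Type} {a b : α} (hab : a ≠ b) {p q : ℕ} {X Y : List α}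
    (h : List.replicate p b ++ a :: X = List.replicate q b ++ a :: Y) : p = q ∧ X = Y := by
  induction p generalizing q with
  | zero => cases q <;> simp_all [List.replicate_succ]
  | succ p ih =>
    cases q with
    | zero => simp_all [List.replicate_succ]
    | succ q => simpa [List.replicate_succ] using ih (by simpa [List.replicate_succ] using h)

def testSubst {A V : Type} (a b : A) (ι : V → ℕ) (N : ℕ) (v : V) : List A :=
  a :: (List.replicate (N + ι v) b ++ [a])

section testSubst

variable {A V : Type} {a b : A} {ι : V → ℕ} {N : ℕ}

lemma le_length_of_wsubst_testSubst_eq (hab : a ≠ b) {p : List (A ⊕ V)} {K : ℕ} {Y : List A}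
    (h : wsubst (testSubst a b ι N) p = List.replicate K b ++ Y) : K ≤ p.length := by
  induction p generalizing K with
  | nil => cases K <;> simp_all [List.replicate_succ]
  | cons s p ih =>
    cases K with
    | zero => simp
    | succ K =>
      rcases s with c | v
      · simpa using ih (by simp_all [List.replicate_succ])
      · simp [testSubst, List.replicate_succ, hab] at h

lemma wsubst_testSubst_eq_nil {p : List (A ⊕ V)} (h : wsubst (testSubst a b ι N) p = []) :
    p = [] := by
  cases p with
  | nil => rfl
  | cons s p => rcases s with c | v <;> simp [testSubst] at h

lemma wsubst_testSubst_cons_inl_ne (hab : a ≠ b) {c : A} {v : V} {p q : List (A ⊕ V)}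
    (hp : p.length < N) :
    wsubst (testSubst a b ι N) (.inl c :: p) ≠ wsubst (testSubst a b ι N) (.inr v :: q) := by
  intro h
  simp only [wsubst_cons, Sum.elim_inl, Sum.elim_inr, testSubst, List.cons_append,
    List.cons.injEq, List.append_assoc] at h
  have := le_length_of_wsubst_testSubst_eq hab h.2
  omega

lemma injOn_wsubst_testSubst (hab : a ≠ b) (hι : ι.Injective) :
    Set.InjOn (wsubst (testSubst a b ι N)) {p | p.length ≤ N} := by
  intro p hp q hq h
  induction p generalizing q with
  | nil => exact (wsubst_testSubst_eq_nil h.symm).symm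
  | cons s p ih =>
    cases q with
    | nil => exact absurd (wsubst_testSubst_eq_nil h) (List.cons_ne_nil s p)
    | cons s' q =>
      replace hp : p.length < N := hp
      replace hq : q.length < N := hq
      rcases s with c | v <;> rcases s' with c' | v'
      · simp only [wsubst_cons, Sum.elim_inl, List.singleton_append, List.cons.injEq] at h
        rw [h.1, ih hp.le hq.le h.2]
      · exact absurd h (wsubst_testSubst_cons_inl_ne hab hp)
      · exact absurd h.symm (wsubst_testSubst_cons_inl_ne hab hq)
      · simp only [wsubst_cons, Sum.elim_inr, testSubst, List.cons_append, List.cons.injEq,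
          List.append_assoc] at h
        obtain ⟨hvv', hpq⟩ := replicate_append_cons_inj hab h.2
        rw [hι (by omega : ι v = ι v'), ih hp.le hq.le hpq]

end testSubst

/-- A positive `Σ₂` sentence `∃x₁…xₙ ∀y₁…y_m. E₁ ∨ … ∨ E_t` (each `E_i` a positive word
equation) holds in `A*` (`|A| ≥ 2`) iff some assignment of the `x`'s makes at least one
`E_i` a trivial equation (both sides syntactically identical as patterns over the `y`'s). -/
theorem stmt17 (A : Type) [Fintype A] (h2 : 2 ≤ Fintype.card A) (n m t : ℕ)
    (E : Fin t → List (A ⊕ (Fin n ⊕ Fin m)) × List (A ⊕ (Fin n ⊕ Fin m))) :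
    (∃ σx : Fin n → List A, ∀ σy : Fin m → List A,
        ∃ i : Fin t, wsubst (Sum.elim σx σy) (E i).1 = wsubst (Sum.elim σx σy) (E i).2) ↔
      (∃ σx : Fin n → List A, ∃ i : Fin t, psubst σx (E i).1 = psubst σx (E i).2) := by
  constructor
  · rintro ⟨σx, hσx⟩
    obtain ⟨a, b, hab⟩ := Fintype.exists_pair_of_one_lt_card (α := A) h2
    let N := Finset.univ.sup fun i => (psubst σx (E i).1).length + (psubst σx (E i).2).length
    obtain ⟨i, hi⟩ := hσx (testSubst a b Fin.val N)
    have hN : (psubst σx (E i).1).length + (psubst σx (E i).2).length ≤ N :=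
      Finset.le_sup (f := fun i => (psubst σx (E i).1).length + (psubst σx (E i).2).length)
        (Finset.mem_univ i)
    refine ⟨σx, i, injOn_wsubst_testSubst (N := N) hab Fin.val_injective
      (show _ ≤ N by omega) (show _ ≤ N by omega) ?_⟩
    rwa [wsubst_psubst, wsubst_psubst]
  · rintro ⟨σx, i, hi⟩
    exact ⟨σx, fun σy => ⟨i, by rw [← wsubst_psubst, hi, wsubst_psubst]⟩⟩
end
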